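/- Let X be a complex Banach space and T a quasi-compact bounded linear operator on X with r(T) ≥ 1 such that sup_{n ∈ ℕ} r(T)^{-n}‖T^n‖ < ∞. Then for every peripheral eigenvalue λ of T (i.e., λ is an eigenvalue with |λ| = r(T)), the operator T − λI has ascent one: ker((T − λI)²) = ker(T − λI). -/

import Mathlib

/-- A bounded operator `T` on a Banach space is *quasi-compact* if some power `T ^ m` (with
`m > 0`) is within distance `< 1` (in operator norm) of a compact operator. -/
def IsQuasiCompact {X : Type*} [NormedAddCommGroup X] [NormedSpace ℂ X]
    (T : X →L[ℂ] X) : Prop :=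
  ∃ m : ℕ, 0 < m ∧ ∃ K : X →L[ℂ] X, IsCompactOperator K ∧ ‖T ^ m - K‖ < 1

/-!
Dividing by the eigenvalue reduces the claim to a power-bounded operator `S` and the eigenvalue
`1`. If `(S - 1)² x = 0` and `y = (S - 1) x`, then `Sⁿ x = x + n • y`, so `n • y` stays bounded
and therefore `y = 0`.
-/

theorem ContinuousLinearMap.pow_apply_eq_add_nsmul_of_sub_one_sq_apply_eq_zero
    {R M : Type*} [Ring R] [TopologicalSpace M] [AddCommGroup M] [Module R M]
    [IsTopologicalAddGroup M] {S : M →L[R] M} {x : M} (hx : (S - 1) ((S - 1) x) = 0) (n : ℕ) :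
    (S ^ n) x = x + n • (S - 1) x := by
  have hSy : S ((S - 1) x) = (S - 1) x := by
    simpa [sub_eq_zero] using hx
  induction n with
  | zero => simp
  | succ n ih =>
    rw [pow_succ', mul_apply_eq_comp, ih, map_add, map_nsmul, hSy, succ_nsmul]
    simp only [sub_apply, one_apply_eq_self]
    abel

theorem nonpos_of_forall_natCast_mul_le {α : Type*} [Field α] [LinearOrder α]
    [IsStrictOrderedRing α] [Archimedean α] {a C : α} (h : ∀ n : ℕ, n * a ≤ C) : a ≤ 0 := by
  by_contra! ha
  obtain ⟨n, hn⟩ := exists_nat_gt (C / a)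
  exact ((div_lt_iff₀ ha).mp hn).not_ge (h n)

section PowerBounded

variable {𝕜 E : Type*} [RCLike 𝕜] [NormedAddCommGroup E] [NormedSpace 𝕜 E]

theorem ContinuousLinearMap.ker_sq_sub_one_eq_ker_of_norm_pow_le {S : E →L[𝕜] E} {B : ℝ}
    (hS : ∀ n : ℕ, ‖S ^ n‖ ≤ B) :
    LinearMap.ker (((S - 1) ^ 2 : E →L[𝕜] E) : E →ₗ[𝕜] E) =
      LinearMap.ker ((S - 1 : E →L[𝕜] E) : E →ₗ[𝕜] E) := by
  refine le_antisymm (fun x hx => ?_) (fun x hx => ?_)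
  · have hchain : (S - 1) ((S - 1) x) = 0 := by simpa [pow_two] using hx
    have hgrowth (n : ℕ) : n * ‖(S - 1) x‖ ≤ (B + 1) * ‖x‖ :=
      calc (n : ℝ) * ‖(S - 1) x‖ = ‖(S ^ n) x - x‖ := by
            rw [pow_apply_eq_add_nsmul_of_sub_one_sq_apply_eq_zero hchain, add_sub_cancel_left,
              RCLike.norm_nsmul 𝕜, nsmul_eq_mul]
        _ ≤ ‖S ^ n‖ * ‖x‖ + ‖x‖ := (norm_sub_le _ _).trans (by gcongr; exact le_opNorm _ _)
        _ ≤ (B + 1) * ‖x‖ := by nlinarith [hS n, norm_nonneg x]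
    simpa using nonpos_of_forall_natCast_mul_le hgrowth
  · simp_all [pow_two]

theorem ContinuousLinearMap.ker_sq_sub_smul_one_eq_ker_of_norm_pow_le {T : E →L[𝕜] E} {l : 𝕜}
    (hl : l ≠ 0) {B : ℝ} (hT : ∀ n : ℕ, ‖T ^ n‖ ≤ B * ‖l‖ ^ n) :
    LinearMap.ker (((T - l • 1) ^ 2 : E →L[𝕜] E) : E →ₗ[𝕜] E) =
      LinearMap.ker ((T - l • 1 : E →L[𝕜] E) : E →ₗ[𝕜] E) := by
  have hscale : T - l • 1 = l • (l⁻¹ • T - 1) := by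
    rw [smul_sub, smul_smul, mul_inv_cancel₀ hl, one_smul]
  have hbounded (n : ℕ) : ‖(l⁻¹ • T) ^ n‖ ≤ B := by
    rw [smul_pow, norm_smul, norm_pow, norm_inv, inv_pow, inv_mul_le_iff₀ (by positivity),
      mul_comm]
    exact hT n
  rw [hscale, smul_pow, toLinearMap_smul, toLinearMap_smul,
    LinearMap.ker_smul _ _ (pow_ne_zero 2 hl), LinearMap.ker_smul _ _ hl]
  exact ker_sq_sub_one_eq_ker_of_norm_pow_le hbounded

end PowerBounded

theorem peripheral_eigenvalue_ascent_one_general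
    {X : Type*} [NormedAddCommGroup X] [NormedSpace ℂ X]
    (T : X →L[ℂ] X)
    (hr : 1 ≤ spectralRadius ℂ T)
    (hbound : ∃ B : ℝ, ∀ n : ℕ, ‖T ^ n‖ ≤ B * (spectralRadius ℂ T).toReal ^ n) :
    ∀ l : ℂ, LinearMap.ker ((T - l • 1 : X →L[ℂ] X) : X →ₗ[ℂ] X) ≠ ⊥ → (‖l‖₊ : ENNReal) = spectralRadius ℂ T →
      LinearMap.ker (((T - l • 1) ^ 2 : X →L[ℂ] X) : X →ₗ[ℂ] X) = LinearMap.ker ((T - l • 1 : X →L[ℂ] X) : X →ₗ[ℂ] X) := by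
  intro l _ hl
  obtain ⟨B, hB⟩ := hbound
  have hl0 : l ≠ 0 := by
    rintro rfl
    simp [← hl] at hr
  rw [← hl, ENNReal.coe_toReal, coe_nnnorm] at hB
  exact ContinuousLinearMap.ker_sq_sub_smul_one_eq_ker_of_norm_pow_le hl0 hB

/-- Let `T` be a quasi-compact operator on a complex Banach space with
`r(T) ≥ 1` and `sup_n r(T)^{-n} ‖T^n‖ < ∞`.  Then for every peripheral eigenvalue `λ`
(an eigenvalue with `|λ| = r(T)`) the operator `T - λI` has ascent one:
`ker (T - λI)² = ker (T - λI)`. -/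
theorem peripheral_eigenvalue_ascent_one
    {X : Type*} [NormedAddCommGroup X] [NormedSpace ℂ X] [CompleteSpace X]
    (T : X →L[ℂ] X) (hqc : IsQuasiCompact T)
    (hr : 1 ≤ spectralRadius ℂ T)
    (hbound : ∃ B : ℝ, ∀ n : ℕ, ‖T ^ n‖ ≤ B * (spectralRadius ℂ T).toReal ^ n) :
    ∀ l : ℂ, LinearMap.ker ((T - l • 1 : X →L[ℂ] X) : X →ₗ[ℂ] X) ≠ ⊥ → (‖l‖₊ : ENNReal) = spectralRadius ℂ T →
      LinearMap.ker (((T - l • 1) ^ 2 : X →L[ℂ] X) : X →ₗ[ℂ] X) = LinearMap.ker ((T - l • 1 : X →L[ℂ] X) : X →ₗ[ℂ] X) :=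
  peripheral_eigenvalue_ascent_one_general T hr hbound
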